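/- The map Ψ(x,y,z) = (z, x+y, xy) from 𝓛 = {(x,y,z) : |x|<1, |y|<1, 2|z| < |1 − x conj(y)| + √((1−|x|²)(1−|y|²))} onto the pentablock 𝒫 is a proper holomorphic map of multiplicity two, with Jacobian determinant x − y, a homogeneous polynomial of degree 1. -/

import Mathlib

open Complex ComplexConjugate

noncomputable section

/-- The circular domain `𝓛` covering the pentablock. -/
def Ldom : Set (ℂ × ℂ × ℂ) :=
  {p | ‖p.1‖ < 1 ∧ ‖p.2.1‖ < 1 ∧
    2 * ‖p.2.2‖ < ‖1 - p.1 * conj p.2.1‖ +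
      Real.sqrt ((1 - ‖p.1‖ ^ 2) * (1 - ‖p.2.1‖ ^ 2))}

/-- The pentablock `𝒫 = {(a₂₁, tr A, det A) : ‖A‖ < 1}`. -/
def Pentablock : Set (ℂ × ℂ × ℂ) :=
  {x | ∃ A : Matrix (Fin 2) (Fin 2) ℂ, ‖Matrix.toEuclideanCLM (𝕜 := ℂ) A‖ < 1 ∧
    x = (A 1 0, A.trace, A.det)}

/-- The covering map `Ψ(x,y,z) = (z, x + y, x y)`. -/
def PsiMap : ℂ × ℂ × ℂ → ℂ × ℂ × ℂ := fun p => (p.2.2, p.1 + p.2.1, p.1 * p.2.1)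

/-!
A `2 × 2` complex matrix `A` is a strict contraction iff `|det A| < 1` and
`∑ |aᵢⱼ|² < 1 + |det A|²`. If `A` has eigenvalues `x, y` (which then lie in the disc), write
`A = [[m + u, β], [z, m - u]]` with `m = (x + y) / 2`: the determinant says `β z = k² - u²` with
`k = (x - y) / 2`, and the norm condition becomes
`2|u|² + |β|² + |z|² < (1 - |x|²)(1 - |y|²) + 2|k|²`. As `|β| |z| ≥ | |k|² - |u|² |`, with
equality for `u` a real multiple of `k`, such `u, β` exist exactly when
`2|z| < |1 - x ȳ| + √((1 - |x|²)(1 - |y|²))`. Hence `𝓛 = Ψ⁻¹(𝒫)`, and surjectivity, properness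
(`𝓛` is bounded) and the two-point fibres off the discriminant locus `s² = 4p` reduce to the
algebra of `Ψ(x, y, z) = (z, x + y, x y)`.
-/

namespace ContinuousLinearMap

variable {𝕜 E F : Type*} [DenselyNormedField 𝕜] [NormedAddCommGroup E] [NormedSpace 𝕜 E]
  [ProperSpace E] [SeminormedAddCommGroup F] [NormedSpace 𝕜 F]

theorem exists_mem_closedBall_norm_apply_eq_opNorm (f : E →L[𝕜] F) :
    ∃ v ∈ Metric.closedBall (0 : E) 1, ‖f v‖ = ‖f‖ := by
  have h := ((isCompact_closedBall (0 : E) 1).image (by fun_prop : Continuous (‖f ·‖))).sSup_mem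
    ((Metric.nonempty_closedBall.mpr zero_le_one).image _)
  rwa [f.sSup_unitClosedBall_eq_norm] at h

theorem opNorm_lt_one_iff (f : E →L[𝕜] F) : ‖f‖ < 1 ↔ ∀ v ≠ 0, ‖f v‖ < ‖v‖ := by
  refine ⟨fun hf v hv ↦ ?_, fun h ↦ ?_⟩
  · calc ‖f v‖ ≤ ‖f‖ * ‖v‖ := f.le_opNorm v
      _ < 1 * ‖v‖ := by gcongr
      _ = ‖v‖ := one_mul _
  · obtain ⟨v, hv, hfv⟩ := f.exists_mem_closedBall_norm_apply_eq_opNorm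
    rw [← hfv]
    rcases eq_or_ne v 0 with rfl | hv0
    · simp
    · exact (h v hv0).trans_le (mem_closedBall_zero_iff.mp hv)

end ContinuousLinearMap

theorem Complex.lagrange_identity (a b c d : ℂ) :
    (‖a‖ ^ 2 + ‖c‖ ^ 2) * (‖b‖ ^ 2 + ‖d‖ ^ 2) =
      ‖a * d - b * c‖ ^ 2 + ‖conj a * b + conj c * d‖ ^ 2 := by
  simp only [Complex.sq_norm, normSq_apply, add_re, add_im, mul_re, mul_im, sub_re, sub_im,
    conj_re, conj_im]
  ring

/-- Completing the square in the Hermitian form `‖v‖² - ‖A v‖²`, `A = [[a, b], [c, d]]`. -/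
theorem Complex.mul_sub_norm_sq_eq (a b c d v₀ v₁ : ℂ) :
    (1 - ‖a‖ ^ 2 - ‖c‖ ^ 2) *
        (‖v₀‖ ^ 2 + ‖v₁‖ ^ 2 - ‖a * v₀ + b * v₁‖ ^ 2 - ‖c * v₀ + d * v₁‖ ^ 2) =
      ‖((1 - ‖a‖ ^ 2 - ‖c‖ ^ 2 : ℝ) : ℂ) * v₀ - (conj a * b + conj c * d) * v₁‖ ^ 2 +
        ((1 - ‖a‖ ^ 2 - ‖c‖ ^ 2) * (1 - ‖b‖ ^ 2 - ‖d‖ ^ 2) - ‖conj a * b + conj c * d‖ ^ 2) *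
          ‖v₁‖ ^ 2 := by
  simp only [Complex.sq_norm, normSq_apply, add_re, add_im, mul_re, mul_im, sub_re, sub_im,
    conj_re, conj_im, ofReal_re, ofReal_im]
  ring

theorem Complex.forall_norm_sq_lt_iff (a b c d : ℂ) :
    (∀ v₀ v₁ : ℂ, v₀ ≠ 0 ∨ v₁ ≠ 0 →
      ‖a * v₀ + b * v₁‖ ^ 2 + ‖c * v₀ + d * v₁‖ ^ 2 < ‖v₀‖ ^ 2 + ‖v₁‖ ^ 2) ↔
    ‖a * d - b * c‖ < 1 ∧ ‖a‖ ^ 2 + ‖b‖ ^ 2 + ‖c‖ ^ 2 + ‖d‖ ^ 2 < 1 + ‖a * d - b * c‖ ^ 2 := by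
  have hL := lagrange_identity a b c d
  have hS := mul_sub_norm_sq_eq a b c d
  set P := 1 - ‖a‖ ^ 2 - ‖c‖ ^ 2
  set R := 1 - ‖b‖ ^ 2 - ‖d‖ ^ 2
  set μ := conj a * b + conj c * d
  constructor
  · intro h
    have hac : ‖a‖ ^ 2 + ‖c‖ ^ 2 < 1 := by simpa using h 1 0 (by simp)
    have hbd : ‖b‖ ^ 2 + ‖d‖ ^ 2 < 1 := by simpa using h 0 1 (by simp)
    have hP : 0 < P := by linarith
    have hR : 0 < R := by linarith
    -- `(μ, P)` annihilates the square in `mul_sub_norm_sq_eq`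
    have hPR : ‖μ‖ ^ 2 < P * R := by
      have h₁ := h μ P (Or.inr (by exact_mod_cast hP.ne'))
      have h₂ := hS μ P
      rw [mul_comm (P : ℂ) μ, sub_self, norm_zero] at h₂
      simp only [Complex.norm_real, Real.norm_eq_abs, sq_abs] at h₁ h₂
      nlinarith
    refine ⟨?_, by nlinarith⟩
    nlinarith [norm_nonneg (a * d - b * c), sq_nonneg ‖μ‖]
  · rintro ⟨hdet, hsum⟩ v₀ v₁ hv
    have hPR : ‖μ‖ ^ 2 < P * R := by nlinarith
    have hPR' : 0 < P + R := by nlinarith [norm_nonneg (a * d - b * c)]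
    have hP : 0 < P := by nlinarith [sq_nonneg ‖μ‖]
    have hpos : 0 < ‖(P : ℂ) * v₀ - μ * v₁‖ ^ 2 + (P * R - ‖μ‖ ^ 2) * ‖v₁‖ ^ 2 := by
      rcases eq_or_ne v₁ 0 with rfl | hv₁
      · have hv₀ : v₀ ≠ 0 := hv.resolve_right (not_not.mpr rfl)
        simp [hP.ne', hv₀]
      · have : 0 < ‖v₁‖ := norm_pos_iff.mpr hv₁
        positivity
    have := hS v₀ v₁
    nlinarith

theorem Complex.norm_sq_add_norm_sq (a b : ℂ) :
    ‖a‖ ^ 2 + ‖b‖ ^ 2 = 2 * ‖(a + b) / 2‖ ^ 2 + 2 * ‖(a - b) / 2‖ ^ 2 := by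
  have h := parallelogram_law_with_norm ℝ ((a + b) / 2) ((a - b) / 2)
  rw [show (a + b) / 2 + (a - b) / 2 = a by ring, show (a + b) / 2 - (a - b) / 2 = b by ring] at h
  linear_combination h

theorem Complex.norm_one_sub_mul_conj_sq (x y : ℂ) :
    ‖1 - x * conj y‖ ^ 2 = (1 - ‖x‖ ^ 2) * (1 - ‖y‖ ^ 2) + ‖x - y‖ ^ 2 := by
  simp only [Complex.sq_norm, normSq_apply, mul_re, mul_im, sub_re, sub_im, one_re, one_im,
    conj_re, conj_im]
  ring

theorem EuclideanSpace.norm_sq_fin_two {𝕜 : Type*} [RCLike 𝕜] (v : EuclideanSpace 𝕜 (Fin 2)) :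
    ‖v‖ ^ 2 = ‖v 0‖ ^ 2 + ‖v 1‖ ^ 2 := by
  simp [EuclideanSpace.norm_sq_eq, Fin.sum_univ_two]

theorem Matrix.toEuclideanCLM_fin_two_apply {𝕜 : Type*} [RCLike 𝕜] (A : Matrix (Fin 2) (Fin 2) 𝕜)
    (v : EuclideanSpace 𝕜 (Fin 2)) (i : Fin 2) :
    Matrix.toEuclideanCLM (𝕜 := 𝕜) A v i = A i 0 * v 0 + A i 1 * v 1 := by
  simp [Matrix.mulVec, dotProduct, Fin.sum_univ_two]

theorem Matrix.norm_toEuclideanCLM_lt_one_iff_fin_two (A : Matrix (Fin 2) (Fin 2) ℂ) :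
    ‖Matrix.toEuclideanCLM (𝕜 := ℂ) A‖ < 1 ↔
      ‖A.det‖ < 1 ∧ ‖A 0 0‖ ^ 2 + ‖A 0 1‖ ^ 2 + ‖A 1 0‖ ^ 2 + ‖A 1 1‖ ^ 2 < 1 + ‖A.det‖ ^ 2 := by
  have hsq : ∀ v : EuclideanSpace ℂ (Fin 2), ‖Matrix.toEuclideanCLM (𝕜 := ℂ) A v‖ < ‖v‖ ↔
      ‖A 0 0 * v 0 + A 0 1 * v 1‖ ^ 2 + ‖A 1 0 * v 0 + A 1 1 * v 1‖ ^ 2 <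
        ‖v 0‖ ^ 2 + ‖v 1‖ ^ 2 := by
    intro v
    rw [← EuclideanSpace.norm_sq_fin_two, ← A.toEuclideanCLM_fin_two_apply,
      ← A.toEuclideanCLM_fin_two_apply, ← EuclideanSpace.norm_sq_fin_two,
      sq_lt_sq₀ (norm_nonneg _) (norm_nonneg _)]
  rw [ContinuousLinearMap.opNorm_lt_one_iff, Matrix.det_fin_two, ← forall_norm_sq_lt_iff]
  refine ⟨fun h v₀ v₁ hv ↦ ?_, fun h v hv ↦ ?_⟩
  · have hv' : !₂[v₀, v₁] ≠ 0 := by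
      simpa [funext_iff, Fin.forall_fin_two, or_iff_not_imp_left] using hv
    simpa using (hsq _).mp (h _ hv')
  · refine (hsq v).mpr (h _ _ ?_)
    by_contra! h0
    exact hv (by ext i; fin_cases i <;> simp [h0])

theorem Matrix.norm_toEuclideanCLM_lt_one_iff_of_trace_det {A : Matrix (Fin 2) (Fin 2) ℂ}
    {x y : ℂ} (hx : ‖x‖ < 1) (hy : ‖y‖ < 1) (htr : A.trace = x + y) (hdet : A.det = x * y) :
    ‖Matrix.toEuclideanCLM (𝕜 := ℂ) A‖ < 1 ↔
      2 * ‖(A 0 0 - A 1 1) / 2‖ ^ 2 + ‖A 0 1‖ ^ 2 + ‖A 1 0‖ ^ 2 <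
        (1 - ‖x‖ ^ 2) * (1 - ‖y‖ ^ 2) + 2 * ‖(x - y) / 2‖ ^ 2 := by
  have hdet1 : ‖A.det‖ < 1 := by
    rw [hdet, norm_mul]; nlinarith [norm_nonneg x, norm_nonneg y]
  rw [norm_toEuclideanCLM_lt_one_iff_fin_two, and_iff_right hdet1, hdet, norm_mul, mul_pow]
  have hA := Complex.norm_sq_add_norm_sq (A 0 0) (A 1 1)
  have hxy := Complex.norm_sq_add_norm_sq x y
  rw [← Matrix.trace_fin_two, htr] at hA
  constructor <;> intro h <;> linarith

theorem Matrix.norm_le_norm_toEuclideanCLM_of_mem_spectrum {𝕜 n : Type*} [RCLike 𝕜] [Fintype n]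
    [DecidableEq n] [Nonempty n] (A : Matrix n n 𝕜) {μ : 𝕜} (hμ : μ ∈ spectrum 𝕜 A) :
    ‖μ‖ ≤ ‖Matrix.toEuclideanCLM (𝕜 := 𝕜) A‖ := by
  refine spectrum.norm_le_norm_of_mem ?_
  rwa [AlgEquiv.spectrum_eq]

theorem Matrix.mem_spectrum_of_fin_two {K : Type*} [Field K] {A : Matrix (Fin 2) (Fin 2) K} {μ : K}
    (h : μ ^ 2 - A.trace * μ + A.det = 0) : μ ∈ spectrum K A :=
  Matrix.mem_spectrum_of_isRoot_charpoly (by simpa [Matrix.charpoly_fin_two] using h)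

theorem two_mul_lt_add_iff {m s N K : ℝ} (hm : 0 < m) (hN : 0 ≤ N) (hK : 0 ≤ K)
    (hNs : N ^ 2 = s ^ 2 + 4 * K) : 2 * m < N + s ↔ m ^ 2 - m * s < K := by
  constructor
  · intro h
    rcases le_or_gt (2 * m) s with h' | h' <;> nlinarith
  · intro h
    nlinarith

theorem exists_mul_eq_sq_sub_sq_of_norm_le {k z : ℂ} (hz : z ≠ 0) (hzk : ‖z‖ ≤ ‖k‖) :
    ∃ u β : ℂ, β * z = k ^ 2 - u ^ 2 ∧ ‖u‖ ^ 2 = ‖k‖ ^ 2 - ‖z‖ ^ 2 ∧ ‖β‖ = ‖z‖ := by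
  have hk : 0 < ‖k‖ := (norm_pos_iff.mpr hz).trans_le hzk
  set c := √(1 - ‖z‖ ^ 2 / ‖k‖ ^ 2)
  have hc : c ^ 2 = 1 - ‖z‖ ^ 2 / ‖k‖ ^ 2 := Real.sq_sqrt <| by
    rw [sub_nonneg, div_le_one (by positivity)]
    gcongr
  refine ⟨c * k, (‖z‖ ^ 2 / ‖k‖ ^ 2 : ℝ) * k ^ 2 / z, ?_, ?_, ?_⟩
  · rw [div_mul_cancel₀ _ hz, mul_pow, ← ofReal_pow, hc]
    push_cast
    ring
  · rw [norm_mul, Complex.norm_of_nonneg (Real.sqrt_nonneg _), mul_pow, hc]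
    field_simp
  · rw [norm_div, norm_mul, norm_pow, Complex.norm_of_nonneg (by positivity)]
    field_simp

theorem exists_mul_eq_sq_sub_sq_iff {k z : ℂ} {s N : ℝ} (hs : 0 < s) (hN : 0 ≤ N)
    (hNs : N ^ 2 = s ^ 2 + 4 * ‖k‖ ^ 2) :
    (∃ u β : ℂ, β * z = k ^ 2 - u ^ 2 ∧ 2 * ‖u‖ ^ 2 + ‖β‖ ^ 2 + ‖z‖ ^ 2 < s ^ 2 + 2 * ‖k‖ ^ 2) ↔
      2 * ‖z‖ < N + s := by
  rcases eq_or_ne z 0 with rfl | hz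
  · simp only [norm_zero, mul_zero]
    exact iff_of_true ⟨k, 0, by ring, by simp; positivity⟩ (by positivity)
  have hm : 0 < ‖z‖ := norm_pos_iff.mpr hz
  rw [two_mul_lt_add_iff hm hN (sq_nonneg _) hNs]
  constructor
  · rintro ⟨u, β, hβ, hlt⟩
    have hrev : (‖k‖ ^ 2 - ‖u‖ ^ 2) ^ 2 ≤ (‖β‖ * ‖z‖) ^ 2 := by
      have h := abs_norm_sub_norm_le (k ^ 2) (u ^ 2)
      rw [norm_pow, norm_pow, ← hβ, norm_mul] at h
      exact sq_le_sq.mpr (h.trans (le_abs_self _))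
    have hsq : (‖z‖ ^ 2 - ‖k‖ ^ 2 + ‖u‖ ^ 2) ^ 2 < (‖z‖ * s) ^ 2 := by
      have := mul_lt_mul_of_pos_right
        (show ‖β‖ ^ 2 < s ^ 2 + 2 * ‖k‖ ^ 2 - 2 * ‖u‖ ^ 2 - ‖z‖ ^ 2 by linarith) (pow_pos hm 2)
      nlinarith
    have := lt_of_abs_lt (abs_lt_of_sq_lt_sq hsq (by positivity))
    nlinarith
  · intro h
    rcases le_or_gt ‖z‖ ‖k‖ with hle | hgt
    · obtain ⟨u, β, hβ, hu, hβz⟩ := exists_mul_eq_sq_sub_sq_of_norm_le hz hle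
      exact ⟨u, β, hβ, by rw [hu, hβz]; nlinarith⟩
    · refine ⟨0, k ^ 2 / z, by rw [div_mul_cancel₀ _ hz]; ring, ?_⟩
      rw [norm_div, norm_pow, div_pow, norm_zero]
      have hlt : (‖z‖ ^ 2 - ‖k‖ ^ 2) ^ 2 < (‖z‖ * s) ^ 2 := by
        have : 0 < ‖z‖ ^ 2 - ‖k‖ ^ 2 := by nlinarith [norm_nonneg k]
        nlinarith
      rw [← sub_pos]
      field_simp
      nlinarith

theorem two_mul_norm_lt_iff_exists {x y z : ℂ} (hx : ‖x‖ < 1) (hy : ‖y‖ < 1) :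
    2 * ‖z‖ < ‖1 - x * conj y‖ + √((1 - ‖x‖ ^ 2) * (1 - ‖y‖ ^ 2)) ↔
      ∃ u β : ℂ, β * z = ((x - y) / 2) ^ 2 - u ^ 2 ∧
        2 * ‖u‖ ^ 2 + ‖β‖ ^ 2 + ‖z‖ ^ 2 <
          (1 - ‖x‖ ^ 2) * (1 - ‖y‖ ^ 2) + 2 * ‖(x - y) / 2‖ ^ 2 := by
  have hD : 0 < (1 - ‖x‖ ^ 2) * (1 - ‖y‖ ^ 2) := by
    have := norm_nonneg x; have := norm_nonneg y
    exact mul_pos (by nlinarith) (by nlinarith)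
  rw [← exists_mul_eq_sq_sub_sq_iff (k := (x - y) / 2) (Real.sqrt_pos.mpr hD) (norm_nonneg _),
    Real.sq_sqrt hD.le]
  rw [norm_one_sub_mul_conj_sq, Real.sq_sqrt hD.le, norm_div, Complex.norm_ofNat]
  ring

open Polynomial in
theorem IsAlgClosed.exists_add_eq_and_mul_eq {K : Type*} [Field K] [IsAlgClosed K] (s p : K) :
    ∃ x y : K, x + y = s ∧ x * y = p := by
  obtain ⟨x, hx⟩ := IsAlgClosed.exists_root (X ^ 2 - C s * X + C p) (by
    rw [show (X ^ 2 - C s * X + C p : K[X]).degree = 2 by compute_degree!]; decide)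
  refine ⟨x, s - x, by ring, ?_⟩
  simp only [IsRoot, eval_add, eval_sub, eval_pow, eval_mul, eval_X, eval_C] at hx
  linear_combination -hx

theorem add_eq_add_and_mul_eq_mul_iff {R : Type*} [CommRing R] [IsDomain R] {x y x' y' : R} :
    x + y = x' + y' ∧ x * y = x' * y' ↔ x = x' ∧ y = y' ∨ x = y' ∧ y = x' := by
  constructor
  · rintro ⟨hs, hp⟩
    have h : (x - x') * (x - y') = 0 := by linear_combination x * hs - hp
    rcases mul_eq_zero.mp h with h | h
    · exact .inl ⟨sub_eq_zero.mp h, by linear_combination hs - h⟩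
    · exact .inr ⟨sub_eq_zero.mp h, by linear_combination hs - h⟩
  · rintro (⟨rfl, rfl⟩ | ⟨rfl, rfl⟩)
    · exact ⟨rfl, rfl⟩
    · exact ⟨add_comm _ _, mul_comm _ _⟩

theorem ldom_eq_preimage_pentablock : Ldom = PsiMap ⁻¹' Pentablock := by
  ext ⟨x, y, z⟩
  simp only [Ldom, Set.mem_preimage, PsiMap, Pentablock, Set.mem_ofPred_eq, Prod.mk.injEq]
  constructor
  · rintro ⟨hx, hy, hz⟩
    obtain ⟨u, β, hβ, hlt⟩ := (two_mul_norm_lt_iff_exists hx hy).mp hz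
    set A : Matrix (Fin 2) (Fin 2) ℂ := !![(x + y) / 2 + u, β; z, (x + y) / 2 - u]
    have htr : A.trace = x + y := by simp [A, Matrix.trace_fin_two]
    have hdet : A.det = x * y := by simp [A, Matrix.det_fin_two]; linear_combination -hβ
    refine ⟨A, (Matrix.norm_toEuclideanCLM_lt_one_iff_of_trace_det hx hy htr hdet).mpr ?_,
      rfl, htr.symm, hdet.symm⟩
    convert hlt using 4 <;> simp [A]
  · rintro ⟨A, hA, rfl, htr, hdet⟩
    have hroot (w : ℂ) (hw : w ^ 2 - A.trace * w + A.det = 0) : ‖w‖ < 1 :=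
      (A.norm_le_norm_toEuclideanCLM_of_mem_spectrum (Matrix.mem_spectrum_of_fin_two hw)).trans_lt
        hA
    have hx := hroot x (by rw [← htr, ← hdet]; ring)
    have hy := hroot y (by rw [← htr, ← hdet]; ring)
    refine ⟨hx, hy, (two_mul_norm_lt_iff_exists hx hy).mpr ⟨(A 0 0 - A 1 1) / 2, A 0 1, ?_,
      (Matrix.norm_toEuclideanCLM_lt_one_iff_of_trace_det hx hy htr.symm hdet.symm).mp hA⟩⟩
    rw [Matrix.trace_fin_two] at htr
    rw [Matrix.det_fin_two] at hdet
    linear_combination hdet - (x + y + A 0 0 + A 1 1) / 4 * htr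

theorem isBounded_ldom : Bornology.IsBounded Ldom := by
  refine (Metric.isBounded_closedBall (x := (0 : ℂ × ℂ × ℂ)) (r := 2)).subset ?_
  rintro ⟨x, y, z⟩ ⟨hx, hy, hz⟩
  simp only at hx hy hz
  have hN : ‖1 - x * conj y‖ ≤ 2 := by
    refine (norm_sub_le _ _).trans ?_
    rw [norm_one, norm_mul, Complex.norm_conj]
    nlinarith [norm_nonneg x, norm_nonneg y]
  have hs : √((1 - ‖x‖ ^ 2) * (1 - ‖y‖ ^ 2)) ≤ 1 := by
    rw [Real.sqrt_le_one]
    have hx' : ‖x‖ ^ 2 ≤ 1 := by nlinarith [norm_nonneg x]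
    have hy' : ‖y‖ ^ 2 ≤ 1 := by nlinarith [norm_nonneg y]
    nlinarith [mul_nonneg (sq_nonneg ‖x‖) (sub_nonneg.mpr hy'), sq_nonneg ‖y‖]
  simp only [Metric.mem_closedBall, dist_zero_right, Prod.norm_def, max_le_iff]
  refine ⟨hx.le.trans one_le_two, hy.le.trans one_le_two, by linarith⟩

theorem psiMap_surjective : Function.Surjective PsiMap := by
  rintro ⟨a, s, p⟩
  obtain ⟨x, y, hs, hp⟩ := IsAlgClosed.exists_add_eq_and_mul_eq s p
  exact ⟨(x, y, a), by simp [PsiMap, hs, hp]⟩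

theorem psiMap_eq_psiMap_iff {x y z x' y' z' : ℂ} :
    PsiMap (x, y, z) = PsiMap (x', y', z') ↔ z = z' ∧ (x = x' ∧ y = y' ∨ x = y' ∧ y = x') := by
  simp only [PsiMap, Prod.mk.injEq, add_eq_add_and_mul_eq_mul_iff]

theorem ncard_preimage_psiMap_singleton {w : ℂ × ℂ × ℂ} (hw : w.2.1 ^ 2 ≠ 4 * w.2.2) :
    (PsiMap ⁻¹' {w}).ncard = 2 := by
  obtain ⟨⟨x, y, z⟩, rfl⟩ := psiMap_surjective w
  have hxy : x ≠ y := by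
    rintro rfl
    exact hw (by simp only [PsiMap]; ring)
  have hfiber : PsiMap ⁻¹' {PsiMap (x, y, z)} = {(x, y, z), (y, x, z)} := by
    ext ⟨x', y', z'⟩
    simp only [Set.mem_preimage, Set.mem_singleton_iff, Set.mem_insert_iff, Prod.mk.injEq,
      psiMap_eq_psiMap_iff]
    tauto
  rw [hfiber, Set.ncard_pair (by simp [hxy])]

theorem hasFDerivAt_psiMap (p : ℂ × ℂ × ℂ) :
    HasFDerivAt PsiMap
      (((ContinuousLinearMap.snd ℂ ℂ ℂ).comp (ContinuousLinearMap.snd ℂ ℂ (ℂ × ℂ))).prod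
        ((ContinuousLinearMap.fst ℂ ℂ (ℂ × ℂ) +
            (ContinuousLinearMap.fst ℂ ℂ ℂ).comp (ContinuousLinearMap.snd ℂ ℂ (ℂ × ℂ))).prod
          (p.1 • (ContinuousLinearMap.fst ℂ ℂ ℂ).comp (ContinuousLinearMap.snd ℂ ℂ (ℂ × ℂ)) +
            p.2.1 • ContinuousLinearMap.fst ℂ ℂ (ℂ × ℂ)))) p :=
  (hasFDerivAt_snd.comp p hasFDerivAt_snd).prodMk
    ((hasFDerivAt_fst.add (hasFDerivAt_fst.comp p hasFDerivAt_snd)).prodMk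
      (hasFDerivAt_fst.mul (hasFDerivAt_fst.comp p hasFDerivAt_snd)))

theorem det_fderiv_psiMap (p : ℂ × ℂ × ℂ) : (fderiv ℂ PsiMap p).det = p.1 - p.2.1 := by
  let e : (ℂ × ℂ × ℂ) ≃ₗ[ℂ] (Fin 3 → ℂ) :=
    ((LinearEquiv.refl ℂ ℂ).prodCongr (LinearEquiv.finTwoArrow ℂ ℂ).symm).trans
      (Fin.consLinearEquiv ℂ fun _ ↦ ℂ)
  rw [(hasFDerivAt_psiMap p).fderiv, ContinuousLinearMap.det, ← LinearMap.det_conj _ e,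
    ← LinearMap.det_toMatrix']
  trans (!![0, 0, 1; 1, 1, 0; p.2.1, p.1, 0] : Matrix (Fin 3) (Fin 3) ℂ).det
  · congr 1
    ext i j
    fin_cases i <;> fin_cases j <;> simp [e, LinearMap.toMatrix'_apply, Fin.tail]
  · simp [Matrix.det_fin_three]

/-- `Ψ : 𝓛 → 𝒫` is a proper holomorphic surjection of multiplicity two whose Jacobian
determinant is the degree-one homogeneous polynomial `x - y`. -/
theorem stmt15 :
    Differentiable ℂ PsiMap ∧
    PsiMap '' Ldom = Pentablock ∧
    (∀ K ⊆ Pentablock, IsCompact K → IsCompact (Ldom ∩ PsiMap ⁻¹' K)) ∧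
    (∀ w ∈ Pentablock, w.2.1 ^ 2 ≠ 4 * w.2.2 → (Ldom ∩ PsiMap ⁻¹' {w}).ncard = 2) ∧
    (∀ p : ℂ × ℂ × ℂ, (fderiv ℂ PsiMap p).det = p.1 - p.2.1) := by
  have hdiff : Differentiable ℂ PsiMap := fun p ↦ (hasFDerivAt_psiMap p).differentiableAt
  refine ⟨hdiff, ?_, fun K hK hKc ↦ ?_, fun w hw hdisc ↦ ?_, det_fderiv_psiMap⟩
  · rw [ldom_eq_preimage_pentablock, Set.image_preimage_eq _ psiMap_surjective]
  · rw [ldom_eq_preimage_pentablock, ← Set.preimage_inter, Set.inter_eq_right.mpr hK]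
    exact Metric.isCompact_of_isClosed_isBounded (hKc.isClosed.preimage hdiff.continuous)
      (isBounded_ldom.subset (ldom_eq_preimage_pentablock ▸ Set.preimage_mono hK))
  · rw [ldom_eq_preimage_pentablock, ← Set.preimage_inter,
      Set.inter_eq_right.mpr (Set.singleton_subset_iff.mpr hw)]
    exact ncard_preimage_psiMap_singleton hdisc
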